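/- Let γ > 0. Assume: (i) the domination of g by g on 𝓑: there is c > 0 such that max(g(x), g(y)) ≤ c·g(A) for all x, y ∈ D and A ∈ 𝓑(x,y); (ii) the square quasi-triangle inequality: there is c > 0 such that g(A_{x,w})² ≤ c·(g(A_{x,y})² + g(A_{y,z})² + g(A_{z,w})²) for all x, y, z, w ∈ D and all A_{x,y} ∈ 𝓑(x,y), A_{y,z} ∈ 𝓑(y,z), A_{z,w} ∈ 𝓑(z,w), A_{x,w} ∈ 𝓑(x,w); (iii) the ratio bound: there is c > 0 such that g(A_{y,z}) ≤ c·max((r(y,z)/r(x,y))^γ, 1)·g(A_{x,y}) for all x, y, z ∈ D and all A_{x,y} ∈ 𝓑(x,y), A_{y,z} ∈ 𝓑(y,z). Then there exists a constant c > 0 such that for all x, y, z, w ∈ D and all A_{x,y} ∈ 𝓑(x,y), A_{z,w} ∈ 𝓑(z,w), A_{x,w} ∈ 𝓑(x,w): g(y)·g(z)·g(A_{x,w})²/(g(A_{x,y})²·g(A_{z,w})²) ≤ c·max(r(y,z)/r(x,y), 1)^γ·max(r(y,z)/r(z,w), 1)^γ. -/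
import Mathlib


open Metric Set MeasureTheory

/-- Distance to the boundary of `D`. -/
noncomputable def rho {d : ℕ} (D : Set (EuclideanSpace ℝ (Fin d)))
    (x : EuclideanSpace ℝ (Fin d)) : ℝ :=
  Metric.infDist x (frontier D)

/-- `r(x,y) := max(ρ_D(x), ρ_D(y), |x-y|)`. -/
noncomputable def rxy {d : ℕ} (D : Set (EuclideanSpace ℝ (Fin d)))
    (x y : EuclideanSpace ℝ (Fin d)) : ℝ :=
  max (max (rho D x) (rho D y)) (dist x y)

/-- The set `𝓑(x,y)`. -/
noncomputable def BB {d : ℕ} (D : Set (EuclideanSpace ℝ (Fin d))) (M ε1 : ℝ)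
    (z0 x y : EuclideanSpace ℝ (Fin d)) : Set (EuclideanSpace ℝ (Fin d)) :=
  if rxy D x y < ε1 then
    {A | A ∈ D ∧ rxy D x y / M < rho D A ∧ max (dist x A) (dist y A) < 5 * rxy D x y}
  else {z0}

open Classical in
/-- `g(x) := min(G(x,z0), C1)`, with the convention `g(z0) = C1` (since `G(z0,z0) = ∞`). -/
noncomputable def gfun {d : ℕ} (G : EuclideanSpace ℝ (Fin d) → EuclideanSpace ℝ (Fin d) → ℝ)
    (z0 : EuclideanSpace ℝ (Fin d)) (C1 : ℝ) (x : EuclideanSpace ℝ (Fin d)) : ℝ :=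
  if x = z0 then C1 else min (G x z0) C1

lemma rxy_symm' {d : ℕ} (D : Set (EuclideanSpace ℝ (Fin d)))
    (x y : EuclideanSpace ℝ (Fin d)) : rxy D x y = rxy D y x := by
  unfold rxy
  rw [max_comm (rho D x), dist_comm]

lemma BB_symm' {d : ℕ} (D : Set (EuclideanSpace ℝ (Fin d))) (M ε1 : ℝ)
    (z0 x y : EuclideanSpace ℝ (Fin d)) : BB D M ε1 z0 x y = BB D M ε1 z0 y x := by
  unfold BB
  rw [rxy_symm' D x y]
  by_cases h : rxy D y x < ε1
  · rw [if_pos h, if_pos h]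
    ext A
    simp only [mem_setOf_eq]
    rw [max_comm (dist x A)]
  · rw [if_neg h, if_neg h]

lemma max_rpow_one' {a γ : ℝ} (ha : 0 ≤ a) (hγ : 0 < γ) :
    max a 1 ^ γ = max (a ^ γ) 1 := by
  rcases le_total a 1 with h | h
  · rw [max_eq_right h, Real.one_rpow, max_eq_right (Real.rpow_le_one ha h hγ.le)]
  · rw [max_eq_left h, max_eq_left]
    calc (1:ℝ) = 1 ^ γ := (Real.one_rpow γ).symm
    _ ≤ a ^ γ := Real.rpow_le_rpow zero_le_one h hγ.le

theorem stmt12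
    {d : ℕ} (hd : 2 ≤ d)
    {D : Set (EuclideanSpace ℝ (Fin d))} (hDopen : IsOpen D) (hDbdd : Bornology.IsBounded D)
    {κ R : ℝ} (hκ0 : 0 < κ) (hκ2 : κ ≤ 1 / 2) (hR : 0 < R)
    {A : EuclideanSpace ℝ (Fin d) → ℝ → EuclideanSpace ℝ (Fin d)}
    (hfat : ∀ Q ∈ frontier D, ∀ r : ℝ, 0 < r → r < R →
      A Q r ∈ D ∧ ball (A Q r) (κ * r) ⊆ D ∩ ball Q r)
    {M ε1 : ℝ} (hM : M = 2 / κ) (hε1 : ε1 = R / (12 * M))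
    {z0 : EuclideanSpace ℝ (Fin d)} (hz0D : z0 ∈ D)
    (hz0l : 2 * R / M < rho D z0) (hz0u : rho D z0 < R)
    {α : ℝ} (hα0 : 0 < α) (hα2 : α < 2) (hαd : α < d)
    {G : EuclideanSpace ℝ (Fin d) → EuclideanSpace ℝ (Fin d) → ℝ}
    (hGsymm : ∀ x y, G x y = G y x)
    (hGpos : ∀ x ∈ D, ∀ y ∈ D, x ≠ y → 0 < G x y)
    {C0 : ℝ} (hC0 : 1 ≤ C0)
    (hGup : ∀ x ∈ D, ∀ y ∈ D, x ≠ y → G x y ≤ C0 * dist x y ^ (α - d))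
    (hGlow : ∀ x ∈ D, ∀ y ∈ D, x ≠ y → dist x y ≤ rho D y / 2 →
      C0⁻¹ * dist x y ^ (α - d) ≤ G x y)
    {C1 : ℝ} (hC1 : C1 = C0 * (2 : ℝ) ^ ((d : ℝ) - α) * rho D z0 ^ (α - d))
    {γ : ℝ} (hγ0 : 0 < γ)
    (hdom : ∃ c > 0, ∀ x ∈ D, ∀ y ∈ D, ∀ A' ∈ BB D M ε1 z0 x y,
      max (gfun G z0 C1 x) (gfun G z0 C1 y) ≤ c * gfun G z0 C1 A')
    (htri : ∃ c > 0, ∀ x ∈ D, ∀ y ∈ D, ∀ z ∈ D, ∀ w ∈ D, ∀ Axy ∈ BB D M ε1 z0 x y,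
      ∀ Ayz ∈ BB D M ε1 z0 y z, ∀ Azw ∈ BB D M ε1 z0 z w, ∀ Axw ∈ BB D M ε1 z0 x w,
      gfun G z0 C1 Axw ^ 2 ≤
        c * (gfun G z0 C1 Axy ^ 2 + gfun G z0 C1 Ayz ^ 2 + gfun G z0 C1 Azw ^ 2))
    (hratio : ∃ c > 0, ∀ x ∈ D, ∀ y ∈ D, ∀ z ∈ D, ∀ Axy ∈ BB D M ε1 z0 x y,
      ∀ Ayz ∈ BB D M ε1 z0 y z,
      gfun G z0 C1 Ayz ≤ c * max ((rxy D y z / rxy D x y) ^ γ) 1 * gfun G z0 C1 Axy)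
 :
    ∃ c > 0, ∀ x ∈ D, ∀ y ∈ D, ∀ z ∈ D, ∀ w ∈ D,
      ∀ Axy ∈ BB D M ε1 z0 x y, ∀ Azw ∈ BB D M ε1 z0 z w, ∀ Axw ∈ BB D M ε1 z0 x w,
      gfun G z0 C1 y * gfun G z0 C1 z * gfun G z0 C1 Axw ^ 2 /
          (gfun G z0 C1 Axy ^ 2 * gfun G z0 C1 Azw ^ 2) ≤
        c * (max (rxy D y z / rxy D x y) 1) ^ γ * (max (rxy D y z / rxy D z w) 1) ^ γ := by
  obtain ⟨c0, hc0, hdom⟩ := hdom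
  obtain ⟨c2, hc2, htri⟩ := htri
  obtain ⟨c3, hc3, hratio⟩ := hratio
  set g := gfun G z0 C1 with hgdef
  -- basic facts
  have hM0 : 0 < M := by rw [hM]; positivity
  have hM4 : 4 ≤ M := by
    rw [hM, le_div_iff₀ hκ0]; linarith
  have hε1R : ε1 ≤ R := by
    rw [hε1, div_le_iff₀ (by linarith)]
    nlinarith
  have hNe : Nonempty (Fin d) := ⟨⟨0, by omega⟩⟩
  have hfne : (frontier D).Nonempty := by
    rw [nonempty_frontier_iff]
    refine ⟨⟨z0, hz0D⟩, fun h => ?_⟩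
    exact NormedSpace.unbounded_univ ℝ (EuclideanSpace ℝ (Fin d)) (h ▸ hDbdd)
  have hfcomp : IsCompact (frontier D) :=
    isCompact_of_isClosed_isBounded isClosed_frontier
      (hDbdd.closure.subset frontier_subset_closure)
  have hrho_pos : ∀ x ∈ D, 0 < rho D x := by
    intro x hx
    have hxf : x ∉ frontier D := by
      rw [hDopen.frontier_eq]; exact fun h => h.2 hx
    exact (isClosed_frontier.notMem_iff_infDist_pos hfne).1 hxf
  have hrho_le : ∀ x y : EuclideanSpace ℝ (Fin d), rho D x ≤ rxy D x y :=
    fun x y => le_trans (le_max_left _ _) (le_max_left _ _)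
  have hrxy_pos : ∀ x ∈ D, ∀ y : EuclideanSpace ℝ (Fin d), 0 < rxy D x y :=
    fun x hx y => lt_of_lt_of_le (hrho_pos x hx) (hrho_le x y)
  have hrxy_nonneg : ∀ x y : EuclideanSpace ℝ (Fin d), 0 ≤ rxy D x y :=
    fun x y => le_trans dist_nonneg (le_max_right _ _)
  have hC1pos : 0 < C1 := by
    have h1 : 0 < rho D z0 := lt_trans (by positivity) hz0l
    rw [hC1]
    have h2 : (0:ℝ) < (2:ℝ) ^ ((d:ℝ) - α) := Real.rpow_pos_of_pos two_pos _
    have h3 : (0:ℝ) < rho D z0 ^ (α - (d:ℝ)) := Real.rpow_pos_of_pos h1 _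
    positivity
  have hgpos : ∀ x ∈ D, 0 < g x := by
    intro x hx
    rw [hgdef]
    unfold gfun
    split
    · exact hC1pos
    · next hne => exact lt_min (hGpos x hx z0 hz0D hne) hC1pos
  have hBBD : ∀ x y A', A' ∈ BB D M ε1 z0 x y → A' ∈ D := by
    intro x y A' hA'
    unfold BB at hA'
    split at hA'
    · exact hA'.1
    · rw [mem_singleton_iff] at hA'; rw [hA']; exact hz0D
  -- nonemptiness of BB
  have hBBne : ∀ x ∈ D, ∀ y ∈ D, (BB D M ε1 z0 x y).Nonempty := by
    intro x hx y hy
    unfold BB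
    split
    case isTrue hlt =>
      set r := rxy D x y with hr
      have hr0 : 0 < r := hrxy_pos x hx y
      have hrR : r < R := lt_of_lt_of_le hlt hε1R
      obtain ⟨Q, hQf, hQd⟩ := hfcomp.exists_infDist_eq_dist hfne x
      obtain ⟨hAD, hAball⟩ := hfat Q hQf r hr0 hrR
      have hQnD : Q ∉ D := by
        rw [hDopen.frontier_eq] at hQf; exact hQf.2
      refine ⟨A Q r, hAD, ?_, ?_⟩
      · -- lower bound on rho of the point
        have hge : κ * r ≤ rho D (A Q r) := by
          by_contra hcon
          push_neg at hcon
          obtain ⟨q, hq, hqd⟩ := (infDist_lt_iff hfne).1 hcon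
          have hqD : q ∈ D := (hAball (mem_ball'.mpr hqd)).1
          rw [hDopen.frontier_eq] at hq
          exact hq.2 hqD
        have heq : r / M = r * κ / 2 := by
          rw [hM]; field_simp
        rw [heq]
        nlinarith
      · -- distance bounds
        have hApos : 0 < κ * r := by positivity
        have hdAQ : dist (A Q r) Q < r := (hAball (mem_ball_self hApos)).2
        have hxQ : dist x Q ≤ r := by
          rw [← hQd]
          exact hrho_le x y
        have hxA : dist x (A Q r) < 2 * r := by
          calc dist x (A Q r) ≤ dist x Q + dist Q (A Q r) := dist_triangle _ _ _
          _ = dist x Q + dist (A Q r) Q := by rw [dist_comm Q]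
          _ < r + r := by linarith
          _ = 2 * r := by ring
        have hxyr : dist x y ≤ r := le_max_right _ _
        have hyA : dist y (A Q r) < 3 * r := by
          calc dist y (A Q r) ≤ dist y x + dist x (A Q r) := dist_triangle _ _ _
          _ = dist x y + dist x (A Q r) := by rw [dist_comm y x]
          _ < r + 2 * r := by linarith
          _ = 3 * r := by ring
        exact max_lt (by linarith) (by linarith)
    case isFalse => exact ⟨z0, rfl⟩
  -- main argument
  refine ⟨c2 * c0 ^ 2 * (2 * c3 + c3 ^ 2), by positivity, ?_⟩
  intro x hx y hy z hz w hw Axy hAxy Azw hAzw Axw hAxw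
  obtain ⟨Ayz, hAyz⟩ := hBBne y hy z hz
  have hgy := hgpos y hy
  have hgz := hgpos z hz
  have hgAxy := hgpos Axy (hBBD _ _ _ hAxy)
  have hgAzw := hgpos Azw (hBBD _ _ _ hAzw)
  have hgAyz := hgpos Ayz (hBBD _ _ _ hAyz)
  set P := max ((rxy D y z / rxy D x y) ^ γ) 1 with hPdef
  set Q := max ((rxy D y z / rxy D z w) ^ γ) 1 with hQdef
  have hP1 : (1:ℝ) ≤ P := le_max_right _ _
  have hQ1 : (1:ℝ) ≤ Q := le_max_right _ _
  have hP0 : (0:ℝ) < P := lt_of_lt_of_le one_pos hP1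
  have hQ0 : (0:ℝ) < Q := lt_of_lt_of_le one_pos hQ1
  have hgy1 : g y ≤ c0 * g Axy := le_trans (le_max_right _ _) (hdom x hx y hy Axy hAxy)
  have hgy2 : g y ≤ c0 * g Ayz := le_trans (le_max_left _ _) (hdom y hy z hz Ayz hAyz)
  have hgz1 : g z ≤ c0 * g Azw := le_trans (le_max_left _ _) (hdom z hz w hw Azw hAzw)
  have hgz2 : g z ≤ c0 * g Ayz := le_trans (le_max_right _ _) (hdom y hy z hz Ayz hAyz)
  have hr1 : g Ayz ≤ c3 * P * g Axy := hratio x hx y hy z hz Axy hAxy Ayz hAyz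
  have hr2 : g Ayz ≤ c3 * Q * g Azw := by
    have h := hratio w hw z hz y hy Azw
      (by rw [BB_symm' D M ε1 z0 w z]; exact hAzw) Ayz
      (by rw [BB_symm' D M ε1 z0 z y]; exact hAyz)
    rw [rxy_symm' D z y, rxy_symm' D w z] at h
    exact h
  have htri' := htri x hx y hy z hz w hw Axy hAxy Ayz hAyz Azw hAzw Axw hAxw
  have hgz3 : g z ≤ c0 * (c3 * P * g Axy) :=
    hgz2.trans (mul_le_mul_of_nonneg_left hr1 hc0.le)
  have hgy3 : g y ≤ c0 * (c3 * Q * g Azw) :=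
    hgy2.trans (mul_le_mul_of_nonneg_left hr2 hc0.le)
  have hca : (0:ℝ) ≤ c0 * g Axy := mul_nonneg hc0.le hgAxy.le
  have hcb : (0:ℝ) ≤ c0 * g Azw := mul_nonneg hc0.le hgAzw.le
  -- three term bounds
  have B3 : g y * g z * g Axy ^ 2 ≤ c0 ^ 2 * c3 * (P * Q) * (g Axy ^ 2 * g Azw ^ 2) := by
    have h2 : g y * g z ≤ c0 ^ 2 * c3 * (P * Q) * g Azw ^ 2 := by
      calc g y * g z ≤ (c0 * (c3 * Q * g Azw)) * (c0 * g Azw) :=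
            mul_le_mul hgy3 hgz1 hgz.le
              (mul_nonneg hc0.le (mul_nonneg (mul_nonneg hc3.le hQ0.le) hgAzw.le))
      _ = (c0 ^ 2 * c3 * g Azw ^ 2) * Q := by ring
      _ ≤ (c0 ^ 2 * c3 * g Azw ^ 2) * (P * Q) := by
            apply mul_le_mul_of_nonneg_left (le_mul_of_one_le_left hQ0.le hP1)
            positivity
      _ = c0 ^ 2 * c3 * (P * Q) * g Azw ^ 2 := by ring
    calc g y * g z * g Axy ^ 2 ≤ (c0 ^ 2 * c3 * (P * Q) * g Azw ^ 2) * g Axy ^ 2 :=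
          mul_le_mul_of_nonneg_right h2 (sq_nonneg _)
    _ = c0 ^ 2 * c3 * (P * Q) * (g Axy ^ 2 * g Azw ^ 2) := by ring
  have B1 : g y * g z * g Azw ^ 2 ≤ c0 ^ 2 * c3 * (P * Q) * (g Axy ^ 2 * g Azw ^ 2) := by
    have h2 : g y * g z ≤ c0 ^ 2 * c3 * (P * Q) * g Axy ^ 2 := by
      calc g y * g z ≤ (c0 * g Axy) * (c0 * (c3 * P * g Axy)) :=
            mul_le_mul hgy1 hgz3 hgz.le hca
      _ = (c0 ^ 2 * c3 * g Axy ^ 2) * P := by ring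
      _ ≤ (c0 ^ 2 * c3 * g Axy ^ 2) * (P * Q) := by
            apply mul_le_mul_of_nonneg_left (le_mul_of_one_le_right hP0.le hQ1)
            positivity
      _ = c0 ^ 2 * c3 * (P * Q) * g Axy ^ 2 := by ring
    calc g y * g z * g Azw ^ 2 ≤ (c0 ^ 2 * c3 * (P * Q) * g Axy ^ 2) * g Azw ^ 2 :=
          mul_le_mul_of_nonneg_right h2 (sq_nonneg _)
    _ = c0 ^ 2 * c3 * (P * Q) * (g Axy ^ 2 * g Azw ^ 2) := by ring
  have B2 : g y * g z * g Ayz ^ 2 ≤ c0 ^ 2 * c3 ^ 2 * (P * Q) * (g Axy ^ 2 * g Azw ^ 2) := by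
    have hsq : g Ayz ^ 2 ≤ (c3 * P * g Axy) * (c3 * Q * g Azw) := by
      rw [sq]
      exact mul_le_mul hr1 hr2 hgAyz.le
        (mul_nonneg (mul_nonneg hc3.le hP0.le) hgAxy.le)
    have hyz : g y * g z ≤ (c0 * g Axy) * (c0 * g Azw) :=
      mul_le_mul hgy1 hgz1 hgz.le hca
    calc g y * g z * g Ayz ^ 2
        ≤ ((c0 * g Axy) * (c0 * g Azw)) * ((c3 * P * g Axy) * (c3 * Q * g Azw)) :=
          mul_le_mul hyz hsq (sq_nonneg _) (mul_nonneg hca hcb)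
    _ = c0 ^ 2 * c3 ^ 2 * (P * Q) * (g Axy ^ 2 * g Azw ^ 2) := by ring
  have main : g y * g z * g Axw ^ 2 ≤
      c2 * c0 ^ 2 * (2 * c3 + c3 ^ 2) * (P * Q) * (g Axy ^ 2 * g Azw ^ 2) := by
    calc g y * g z * g Axw ^ 2
        ≤ (g y * g z) * (c2 * (g Axy ^ 2 + g Ayz ^ 2 + g Azw ^ 2)) :=
          mul_le_mul_of_nonneg_left htri' (mul_nonneg hgy.le hgz.le)
    _ = c2 * (g y * g z * g Axy ^ 2) + c2 * (g y * g z * g Ayz ^ 2)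
        + c2 * (g y * g z * g Azw ^ 2) := by ring
    _ ≤ c2 * (c0 ^ 2 * c3 * (P * Q) * (g Axy ^ 2 * g Azw ^ 2))
        + c2 * (c0 ^ 2 * c3 ^ 2 * (P * Q) * (g Axy ^ 2 * g Azw ^ 2))
        + c2 * (c0 ^ 2 * c3 * (P * Q) * (g Axy ^ 2 * g Azw ^ 2)) :=
          add_le_add (add_le_add (mul_le_mul_of_nonneg_left B3 hc2.le)
            (mul_le_mul_of_nonneg_left B2 hc2.le)) (mul_le_mul_of_nonneg_left B1 hc2.le)
    _ = c2 * c0 ^ 2 * (2 * c3 + c3 ^ 2) * (P * Q) * (g Axy ^ 2 * g Azw ^ 2) := by ring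
  have hden : (0:ℝ) < g Axy ^ 2 * g Azw ^ 2 :=
    mul_pos (pow_pos hgAxy 2) (pow_pos hgAzw 2)
  rw [div_le_iff₀ hden]
  have hra : (0:ℝ) ≤ rxy D y z / rxy D x y :=
    div_nonneg (hrxy_nonneg y z) (hrxy_nonneg x y)
  have hrb : (0:ℝ) ≤ rxy D y z / rxy D z w :=
    div_nonneg (hrxy_nonneg y z) (hrxy_nonneg z w)
  rw [max_rpow_one' hra hγ0, max_rpow_one' hrb hγ0]
  calc g y * g z * g Axw ^ 2
      ≤ c2 * c0 ^ 2 * (2 * c3 + c3 ^ 2) * (P * Q) * (g Axy ^ 2 * g Azw ^ 2) := main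
  _ = c2 * c0 ^ 2 * (2 * c3 + c3 ^ 2) * P * Q * (g Axy ^ 2 * g Azw ^ 2) := by ring
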